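/- Let G be a finite group whose order is divisible by at least two distinct primes. Then G has dense CD-subgroups if and only if G is a nonabelian group of order pq for distinct primes p and q. -/

import Mathlib

open Pointwise

/-- Chermak–Delgado measure of a subgroup. -/
noncomputable def mCD (G : Type*) [Group G] (H : Subgroup G) : ℕ :=
  Nat.card H * Nat.card (Subgroup.centralizer (H : Set G))

/-- Maximal Chermak–Delgado measure. -/
noncomputable def mStar (G : Type*) [Group G] : ℕ :=
  sSup (Set.range (mCD G))

/-- Chermak–Delgado lattice (as a set of subgroups). -/
def CD (G : Type*) [Group G] : Set (Subgroup G) :=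
  {H | mCD G H = mStar G}

/-- A group has dense CD-subgroups if for all subgroups H < K with H not
maximal in K, there exists X in CD(G) with H < X < K. -/
def DenseCD (G : Type*) [Group G] : Prop :=
  ∀ H K : Subgroup G, H < K → (∃ L : Subgroup G, H < L ∧ L < K) →
    ∃ X ∈ CD G, H < X ∧ X < K

/-!
The measure is supermodular, `m(H) m(K) ≤ m(H ⊓ K) m(H ⊔ K)`, so `CD(G)` is closed under
intersections, centralizers (with `C(C(X)) = X`) and conjugation: it has a least member `M`, which
is normal and abelian, and a greatest member `C(M)`. Under density, a CD-subgroup maximal among the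
abelian ones is self-centralizing, so `m*` is a square; `|M|` and `[G : C(M)]` are each `1` or a
prime; and for every prime `s` with `s² ∣ |G|` some CD-subgroup of order `s` contains `M`.
Moreover `m* ≠ |G|`: otherwise a CD-subgroup `X` whose order is the least prime divisor `u` of
`|G|` has a centralizer of index `u`, so `X = C(C(X))` is normal and `u ∣ |Aut X| = u - 1`.
Comparing prime factors in `m* · [G : C(M)] = |M| · |G|` then leaves only
`|G| = |M| · [G : C(M)]` with two distinct primes, and `G` is nonabelian as `C(M) ≠ G`.

Conversely, in a nonabelian group of order `pq` the only pair `H < K` that is not a covering is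
`1 < G`, and neither `1` nor `G` lies in `CD(G)`, as `m(1) = m(G) = pq < max(p², q²) ≤ m*`.
-/

open Subgroup

section GroupLemmas

variable {G : Type*} [Group G]

lemma Subgroup.centralizer_sup (H K : Subgroup G) :
    centralizer ((H ⊔ K : Subgroup G) : Set G) =
      centralizer (H : Set G) ⊓ centralizer (K : Set G) := by
  rw [sup_eq_closure, centralizer_closure]
  ext x
  simp [mem_centralizer_iff, or_imp, forall_and]

lemma Subgroup.sup_zpowers_le_centralizer {A : Subgroup G} (hA : A ≤ centralizer (A : Set G))
    {x : G} (hx : x ∈ centralizer (A : Set G)) :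
    A ⊔ zpowers x ≤ centralizer ((A ⊔ zpowers x : Subgroup G) : Set G) := by
  have hxA : zpowers x ≤ centralizer (A : Set G) := zpowers_le.mpr hx
  rw [centralizer_sup]
  exact sup_le (le_inf hA (le_centralizer_iff.mp hxA)) (le_inf hxA (le_centralizer _))

lemma Subgroup.card_mul_relIndex {H K : Subgroup G} (h : H ≤ K) :
    Nat.card H * H.relIndex K = Nat.card K := by
  rw [← relIndex_bot_left, ← relIndex_bot_left, relIndex_mul_relIndex _ _ _ bot_le h]

lemma Subgroup.index_centralizer_dvd_card_mulAut (H : Subgroup G) [H.Normal] :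
    (centralizer (H : Set G)).index ∣ Nat.card (MulAut H) := by
  have key := card_dvd_of_injective _ (QuotientGroup.kerLift_injective H.normalizerMonoidHom)
  rwa [normalizerMonoidHom_ker, ← index, ← relIndex, normalizer_eq_top, relIndex_top_right] at key

variable [Finite G]

lemma Subgroup.card_mul_card_le_card_sup_mul_card_inf (H K : Subgroup G) :
    Nat.card H * Nat.card K ≤ Nat.card ↥(H ⊔ K) * Nat.card ↥(H ⊓ K) := by
  have hrel : K.relIndex H ≤ K.relIndex (H ⊔ K) :=
    relIndex_le_of_le_right le_sup_left
      (ne_zero_of_dvd_ne_zero Nat.card_pos.ne' (relIndex_dvd_card _ _))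
  calc Nat.card H * Nat.card K = Nat.card ↥(H ⊓ K) * K.relIndex H * Nat.card K := by
        rw [← inf_relIndex_left, card_mul_relIndex inf_le_left]
    _ ≤ Nat.card ↥(H ⊓ K) * K.relIndex (H ⊔ K) * Nat.card K := by gcongr
    _ = Nat.card ↥(H ⊔ K) * Nat.card ↥(H ⊓ K) := by
        rw [← card_mul_relIndex (le_sup_right : K ≤ H ⊔ K)]; ring

lemma Subgroup.exists_bot_lt_lt_of_not_prime_card {K : Subgroup G} (hK : K ≠ ⊥)
    (hprime : ¬ (Nat.card K).Prime) : ∃ L : Subgroup G, ⊥ < L ∧ L < K := by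
  have hu : (Nat.card K).minFac.Prime := Nat.minFac_prime (mt card_eq_one.mp hK)
  have := Fact.mk hu
  obtain ⟨g, hg⟩ := exists_prime_orderOf_dvd_card' (G := K) _ (Nat.minFac_dvd _)
  have hcard : Nat.card (zpowers (g : G)) = (Nat.card K).minFac := by
    rw [Nat.card_zpowers, orderOf_coe, hg]
  refine ⟨zpowers (g : G), bot_lt_iff_ne_bot.mpr fun h => ?_,
    lt_of_le_of_ne (zpowers_le.mpr g.2) fun h => ?_⟩
  · rw [h, card_bot] at hcard
    exact hu.ne_one hcard.symm
  · rw [h] at hcard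
    exact hprime (hcard ▸ hu)

lemma Subgroup.exists_lt_lt_top_of_not_prime_index {N : Subgroup G} [N.Normal] (hN : N ≠ ⊤)
    (hprime : ¬ N.index.Prime) : ∃ L : Subgroup G, N < L ∧ L < ⊤ := by
  have hcard : Nat.card (⊤ : Subgroup (G ⧸ N)) = N.index := by rw [card_top, index_eq_card]
  obtain ⟨S, hbot, htop⟩ := exists_bot_lt_lt_of_not_prime_card (K := (⊤ : Subgroup (G ⧸ N)))
    (fun h => hN (index_eq_one.mp (by rw [← hcard, h, card_bot]))) (hcard ▸ hprime)
  refine ⟨S.comap (QuotientGroup.mk' N), ?_, ?_⟩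
  · rwa [← comap_lt_comap_of_surjective (QuotientGroup.mk'_surjective N), MonoidHom.comap_bot,
      QuotientGroup.ker_mk'] at hbot
  · rwa [← comap_lt_comap_of_surjective (QuotientGroup.mk'_surjective N), comap_top] at htop

lemma Subgroup.eq_bot_of_lt_of_card_prime {H L : Subgroup G} (hHL : H < L)
    (hL : (Nat.card L).Prime) : H = ⊥ :=
  ((Nat.dvd_prime hL).mp (card_dvd_of_le hHL.le)).elim card_eq_one.mp
    fun h => absurd (eq_of_le_of_card_ge hHL.le h.ge) hHL.ne

end GroupLemmas

section ChermakDelgado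

variable {G : Type*} [Group G]

lemma mCD_bot : mCD G ⊥ = Nat.card G := by
  rw [mCD, card_bot, one_mul, coe_bot, centralizer_eq_top_iff_subset.mpr (by simp), card_top]

lemma mCD_top : mCD G ⊤ = Nat.card G * Nat.card (center G) := by
  rw [mCD, coe_top, centralizer_univ, card_top]

variable [Finite G]

lemma mCD_le_mStar (H : Subgroup G) : mCD G H ≤ mStar G :=
  le_csSup (Set.finite_range _).bddAbove ⟨H, rfl⟩

lemma exists_mem_CD : ∃ H, H ∈ CD G :=
  Nat.sSup_mem (Set.range_nonempty (mCD G)) (Set.finite_range _).bddAbove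

lemma mStar_pos : 0 < mStar G :=
  (Nat.mul_pos Nat.card_pos Nat.card_pos).trans_le (mCD_le_mStar ⊥)

lemma mem_CD_iff_mStar_le {H : Subgroup G} : H ∈ CD G ↔ mStar G ≤ mCD G H :=
  ⟨Eq.ge, fun h => (mCD_le_mStar H).antisymm h⟩

lemma mCD_mul_mCD_le_mCD_inf_mul_mCD_sup (H K : Subgroup G) :
    mCD G H * mCD G K ≤ mCD G (H ⊓ K) * mCD G (H ⊔ K) := by
  have hcent : Nat.card (centralizer (H : Set G)) * Nat.card (centralizer (K : Set G)) ≤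
      Nat.card (centralizer ((H ⊓ K : Subgroup G) : Set G)) *
        Nat.card (centralizer ((H ⊔ K : Subgroup G) : Set G)) := by
    rw [centralizer_sup]
    refine (card_mul_card_le_card_sup_mul_card_inf _ _).trans (Nat.mul_le_mul_right _ ?_)
    exact card_le_of_le (sup_le (centralizer_le inf_le_left) (centralizer_le inf_le_right))
  calc mCD G H * mCD G K
      = (Nat.card H * Nat.card K) *
          (Nat.card (centralizer (H : Set G)) * Nat.card (centralizer (K : Set G))) := by
        simp only [mCD]; ring
    _ ≤ (Nat.card ↥(H ⊔ K) * Nat.card ↥(H ⊓ K)) *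
          (Nat.card (centralizer ((H ⊓ K : Subgroup G) : Set G)) *
            Nat.card (centralizer ((H ⊔ K : Subgroup G) : Set G))) :=
        Nat.mul_le_mul (card_mul_card_le_card_sup_mul_card_inf H K) hcent
    _ = mCD G (H ⊓ K) * mCD G (H ⊔ K) := by simp only [mCD]; ring

lemma inf_mem_CD {H K : Subgroup G} (hH : H ∈ CD G) (hK : K ∈ CD G) : H ⊓ K ∈ CD G := by
  have h := (mCD_mul_mCD_le_mCD_inf_mul_mCD_sup H K).trans
    (Nat.mul_le_mul_left (mCD G (H ⊓ K)) (mCD_le_mStar (H ⊔ K)))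
  rw [hH, hK] at h
  exact mem_CD_iff_mStar_le.mpr (Nat.le_of_mul_le_mul_right h mStar_pos)

lemma mCD_le_mCD_map (f : G ≃* G) (H : Subgroup G) : mCD G H ≤ mCD G (H.map f.toMonoidHom) := by
  have hcent := card_le_of_le (map_centralizer_le_centralizer_image (H : Set G) f.toMonoidHom)
  rw [card_map_of_injective f.injective] at hcent
  rw [mCD, mCD, card_map_of_injective f.injective, coe_map]
  exact Nat.mul_le_mul_left _ hcent

lemma centralizer_mem_CD {X : Subgroup G} (hX : X ∈ CD G) : centralizer (X : Set G) ∈ CD G := by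
  refine mem_CD_iff_mStar_le.mpr ?_
  rw [← hX, mCD, mCD, mul_comm]
  exact Nat.mul_le_mul_left _ (card_le_of_le (le_centralizer_iff.mpr le_rfl))

lemma centralizer_centralizer_of_mem_CD {X : Subgroup G} (hX : X ∈ CD G) :
    centralizer ((centralizer (X : Set G) : Subgroup G) : Set G) = X := by
  have hle : X ≤ centralizer ((centralizer (X : Set G) : Subgroup G) : Set G) :=
    le_centralizer_iff.mpr le_rfl
  refine (eq_of_le_of_card_ge hle ?_).symm
  have h := mCD_le_mStar (centralizer (X : Set G))
  rw [← hX, mCD, mCD, mul_comm] at h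
  exact Nat.le_of_mul_le_mul_right h Nat.card_pos

end ChermakDelgado

section LeastCD

variable {G : Type*} [Group G] [Finite G]

lemma exists_isLeast_CD : ∃ M, IsLeast (CD G) M := by
  obtain ⟨M, hM⟩ := exists_minimal_of_wellFoundedLT (· ∈ CD G) exists_mem_CD
  exact ⟨M, hM.1, fun _ hX => le_inf_iff.mp (hM.2 (inf_mem_CD hM.1 hX) inf_le_left) |>.2⟩

variable {M : Subgroup G} (hM : IsLeast (CD G) M)
include hM

lemma normal_of_isLeast_CD : M.Normal := by
  refine normal_iff_map_conj_eq.mpr fun g => (eq_of_le_of_card_ge (hM.2 ?_) ?_).symm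
  · exact mem_CD_iff_mStar_le.mpr (hM.1.symm.le.trans (mCD_le_mCD_map (MulAut.conj g) M))
  · exact (card_map_of_injective (MulAut.conj g).injective).le

lemma le_centralizer_of_isLeast_CD : M ≤ centralizer (M : Set G) :=
  hM.2 (centralizer_mem_CD hM.1)

lemma isGreatest_CD_centralizer_of_isLeast : IsGreatest (CD G) (centralizer (M : Set G)) :=
  ⟨centralizer_mem_CD hM.1, fun _ hX =>
    le_centralizer_iff.mp (hM.2 (centralizer_mem_CD hX))⟩

end LeastCD

namespace DenseCD

variable {G : Type*} [Group G] [Finite G] (hd : DenseCD G)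
include hd

lemma exists_centralizer_eq : ∃ A ∈ CD G, centralizer (A : Set G) = A := by
  obtain ⟨M, hM⟩ := exists_isLeast_CD (G := G)
  obtain ⟨A, -, hA⟩ := Finite.exists_le_maximal (p := fun A => A ∈ CD G ∧ A ≤ centralizer A)
    ⟨hM.1, le_centralizer_of_isLeast_CD hM⟩
  refine ⟨A, hA.1.1, ?_⟩
  by_contra hne
  have hlt : A < centralizer (A : Set G) := lt_of_le_of_ne hA.1.2 (Ne.symm hne)
  obtain ⟨X, hXA, hX⟩ := exists_minimal_le_of_wellFoundedLT (fun X => X ∈ CD G ∧ A < X)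
    (centralizer A) ⟨centralizer_mem_CD hA.1.1, hlt⟩
  -- by minimality of `X` and density, `X` covers `A`, so `X = A ⊔ ⟨x⟩` is abelian
  obtain ⟨x, hxX, hxA⟩ := SetLike.exists_of_lt hX.1.2
  have hAx : A < A ⊔ zpowers x :=
    lt_of_le_of_ne le_sup_left fun h => hxA (h ▸ mem_sup_right (mem_zpowers x))
  have hAxX : A ⊔ zpowers x = X := by
    refine (sup_le hX.1.2.le (zpowers_le.mpr hxX)).eq_of_not_lt fun hlt' => ?_
    obtain ⟨Y, hY, hAY, hYX⟩ := hd A X hX.1.2 ⟨_, hAx, hlt'⟩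
    exact hYX.not_ge (hX.2 ⟨hY, hAY⟩ hYX.le)
  have hXab : X ≤ centralizer (X : Set G) := hAxX ▸ sup_zpowers_le_centralizer hA.1.2 (hXA hxX)
  exact hX.1.2.ne (hA.eq_of_le ⟨hX.1.1, hXab⟩ hX.1.2.le)

lemma isSquare_mStar : IsSquare (mStar G) := by
  obtain ⟨A, hA, hAA⟩ := hd.exists_centralizer_eq
  exact ⟨Nat.card A, by rw [← hA, mCD, hAA]⟩

lemma exists_mem_CD_card_eq {s : ℕ} (hs : s.Prime) (hsq : s ^ 2 ∣ Nat.card G) :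
    ∃ X ∈ CD G, Nat.card X = s := by
  have := Fact.mk hs
  obtain ⟨K, hK⟩ := Sylow.exists_subgroup_card_pow_prime s hsq
  have hK_ne_bot : K ≠ ⊥ := fun h =>
    (Nat.one_lt_pow two_ne_zero hs.one_lt).ne (by rwa [h, card_bot] at hK)
  have hK_not_prime : ¬ (Nat.card K).Prime := hK ▸ Nat.Prime.not_prime_pow le_rfl
  obtain ⟨L, hL, hLK⟩ := exists_bot_lt_lt_of_not_prime_card hK_ne_bot hK_not_prime
  obtain ⟨X, hX, hbX, hXK⟩ := hd ⊥ K (hL.trans hLK) ⟨L, hL, hLK⟩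
  obtain ⟨k, hk, hXk⟩ := (Nat.dvd_prime_pow hs).mp (hK ▸ card_dvd_of_le hXK.le)
  refine ⟨X, hX, ?_⟩
  interval_cases k
  · exact absurd (card_eq_one.mp hXk) hbX.ne'
  · rw [hXk, pow_one]
  · exact absurd (eq_of_le_of_card_ge hXK.le (hK ▸ hXk.ge)) hXK.ne

lemma mStar_ne_card (hG : 1 < Nat.card G) : mStar G ≠ Nat.card G := by
  intro hstar
  set u := (Nat.card G).minFac
  have hu : u.Prime := Nat.minFac_prime hG.ne'
  obtain ⟨k, hk⟩ := hd.isSquare_mStar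
  have huk : u ∣ k := (hu.dvd_mul.mp (hk ▸ hstar ▸ Nat.minFac_dvd _)).elim id id
  obtain ⟨X, hX, hXu⟩ := hd.exists_mem_CD_card_eq hu
    (by rw [← hstar, hk, sq]; exact mul_dvd_mul huk huk)
  set C := centralizer (X : Set G)
  have hindex : C.index = u := by
    have hXC : Nat.card C * u = Nat.card C * C.index := by
      rw [card_mul_index, ← hstar, ← hX, mCD, hXu, mul_comm]
    exact (Nat.eq_of_mul_eq_mul_left Nat.card_pos hXC).symm
  -- `X = C_G(C_G(X))` is normal since `C_G(X)` has index the smallest prime divisor of `|G|`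
  have : C.Normal := normal_of_index_eq_minFac_card hindex
  have : X.Normal := by rw [← centralizer_centralizer_of_mem_CD hX]; infer_instance
  have := Fact.mk hu
  have : IsCyclic X := isCyclic_of_prime_card hXu
  have hdvd := index_centralizer_dvd_card_mulAut X
  rw [IsCyclic.card_mulAut, hXu, Nat.totient_prime hu, hindex] at hdvd
  exact (Nat.sub_lt hu.pos one_pos).not_ge (Nat.le_of_dvd (Nat.sub_pos_of_lt hu.one_lt) hdvd)

section LeastCD

variable {M : Subgroup G} (hM : IsLeast (CD G) M)
include hM

lemma eq_bot_or_card_prime_of_isLeast_CD : M = ⊥ ∨ (Nat.card M).Prime := by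
  refine or_iff_not_imp_left.mpr fun hbot => by_contra fun hprime => ?_
  obtain ⟨L, hL, hLM⟩ := exists_bot_lt_lt_of_not_prime_card hbot hprime
  obtain ⟨X, hX, -, hXM⟩ := hd ⊥ M (hL.trans hLM) ⟨L, hL, hLM⟩
  exact hXM.not_ge (hM.2 hX)

lemma centralizer_eq_top_or_index_prime_of_isLeast_CD :
    centralizer (M : Set G) = ⊤ ∨ (centralizer (M : Set G)).index.Prime := by
  have := normal_of_isLeast_CD hM
  refine or_iff_not_imp_left.mpr fun htop => by_contra fun hprime => ?_
  obtain ⟨L, hL, hLtop⟩ := exists_lt_lt_top_of_not_prime_index htop hprime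
  obtain ⟨X, hX, hNX, -⟩ := hd _ ⊤ (hL.trans hLtop) ⟨L, hL, hLtop⟩
  exact hNX.not_ge ((isGreatest_CD_centralizer_of_isLeast hM).2 hX)

lemma eq_card_of_sq_dvd_card (hr : (Nat.card M).Prime) {s : ℕ} (hs : s.Prime)
    (hsq : s ^ 2 ∣ Nat.card G) : s = Nat.card M := by
  obtain ⟨X, hX, hXs⟩ := hd.exists_mem_CD_card_eq hs hsq
  exact ((Nat.prime_dvd_prime_iff_eq hr hs).mp (hXs ▸ card_dvd_of_le (hM.2 hX))).symm

lemma eq_card_of_isSquare_card_mul (hr : (Nat.card M).Prime)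
    (hsq : IsSquare (Nat.card M * Nat.card G)) {s : ℕ} (hs : s.Prime) (hsn : s ∣ Nat.card G) :
    s = Nat.card M := by
  by_cases hsr : s = Nat.card M
  · exact hsr
  obtain ⟨k, hk⟩ := hsq
  have hsk : s ∣ k := (hs.dvd_mul.mp (hk ▸ dvd_mul_of_dvd_right hsn _)).elim id id
  have hcop : Nat.Coprime (s ^ 2) (Nat.card M) :=
    Nat.Coprime.pow_left 2 ((Nat.coprime_primes hs hr).mpr hsr)
  refine hd.eq_card_of_sq_dvd_card hM hr hs (hcop.dvd_of_dvd_mul_left ?_)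
  rw [hk, sq]
  exact mul_dvd_mul hsk hsk

lemma card_eq_mul_index_of_isLeast_CD (hr : (Nat.card M).Prime)
    (ht : (centralizer (M : Set G)).index.Prime)
    (hrt : Nat.card M ≠ (centralizer (M : Set G)).index) :
    Nat.card G = Nat.card M * (centralizer (M : Set G)).index := by
  set N := centralizer (M : Set G)
  set t := N.index
  have := normal_of_isLeast_CD hM
  have hcop : Nat.Coprime (Nat.card M) t := (Nat.coprime_primes hr ht).mpr hrt
  by_contra hne
  have := Fact.mk ht
  obtain ⟨T, hT⟩ := Sylow.exists_subgroup_card_pow_prime (n := 1) t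
    (by rw [pow_one]; exact index_dvd_card N)
  rw [pow_one] at hT
  -- the subgroup `T ⊔ M` of order `|M| t` lies strictly between `T` and `G`
  have hTM : T < T ⊔ M := lt_of_le_of_ne le_sup_left fun h => hrt
    ((Nat.prime_dvd_prime_iff_eq hr ht).mp (hT ▸ card_dvd_of_le (h ▸ le_sup_right)))
  have hTMtop : T ⊔ M < ⊤ := by
    refine lt_top_iff_ne_top.mpr fun h => hne (Nat.dvd_antisymm ?_ ?_)
    · rw [← card_top (G := G), ← h, ← card_mul_relIndex le_sup_right, relIndex_sup_right]
      exact mul_dvd_mul_left _ (hT ▸ relIndex_dvd_card _ _)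
    · exact hcop.mul_dvd_of_dvd_of_dvd (card_subgroup_dvd_card M) (index_dvd_card N)
  obtain ⟨X, hX, hTX, -⟩ := hd T ⊤ (hTM.trans hTMtop) ⟨_, hTM, hTMtop⟩
  have htN : t ∣ Nat.card N :=
    hT ▸ card_dvd_of_le (hTX.le.trans ((isGreatest_CD_centralizer_of_isLeast hM).2 hX))
  refine hrt (hd.eq_card_of_sq_dvd_card hM hr ht ?_).symm
  rw [← card_mul_index N, sq]
  exact mul_dvd_mul_right htN t

end LeastCD

theorem exists_primes_card_eq_mul {p q : ℕ} (hp : p.Prime) (hq : q.Prime) (hpq : p ≠ q)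
    (hpG : p ∣ Nat.card G) (hqG : q ∣ Nat.card G) :
    ∃ r t : ℕ, r.Prime ∧ t.Prime ∧ r ≠ t ∧ Nat.card G = r * t ∧
      ¬ ∀ a b : G, a * b = b * a := by
  have hG : 1 < Nat.card G := hp.one_lt.trans_le (Nat.le_of_dvd Nat.card_pos hpG)
  obtain ⟨M, hM⟩ := exists_isLeast_CD (G := G)
  have hstar : mStar G * (centralizer (M : Set G)).index = Nat.card M * Nat.card G := by
    rw [← hM.1, mCD, mul_assoc, card_mul_index]
  rcases hd.eq_bot_or_card_prime_of_isLeast_CD hM with hbot | hr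
  · exact absurd (by rw [← hM.1, hbot, mCD_bot]) (hd.mStar_ne_card hG)
  obtain ⟨s, hs, hsn, hsM⟩ : ∃ s, s.Prime ∧ s ∣ Nat.card G ∧ s ≠ Nat.card M := by
    by_cases hpM : p = Nat.card M
    · exact ⟨q, hq, hqG, hpM ▸ hpq.symm⟩
    · exact ⟨p, hp, hpG, hpM⟩
  rcases hd.centralizer_eq_top_or_index_prime_of_isLeast_CD hM with htop | ht
  · rw [htop, index_top, mul_one] at hstar
    exact (hsM (hd.eq_card_of_isSquare_card_mul hM hr (hstar ▸ hd.isSquare_mStar) hs hsn)).elim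
  by_cases hrt : Nat.card M = (centralizer (M : Set G)).index
  · rw [← hrt, mul_comm] at hstar
    exact (hd.mStar_ne_card hG (Nat.eq_of_mul_eq_mul_left hr.pos hstar)).elim
  refine ⟨_, _, hr, ht, hrt, hd.card_eq_mul_index_of_isLeast_CD hM hr ht hrt, fun hcomm => ?_⟩
  have htop : centralizer (M : Set G) = ⊤ :=
    centralizer_eq_top_iff_subset.mpr fun x _ => mem_center_iff.mpr fun g => hcomm g x
  exact ht.ne_one (by rw [htop, index_top])

end DenseCD

section PrimeMulPrime

variable {G : Type*} [Group G] [Finite G] {p q : ℕ} (hp : p.Prime) (hq : q.Prime)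
  (hn : Nat.card G = p * q)
include hp hq hn

lemma card_eq_or_card_eq_of_bot_lt_of_lt_top {L : Subgroup G} (hL : ⊥ < L) (hLtop : L < ⊤) :
    Nat.card L = p ∨ Nat.card L = q := by
  obtain ⟨a, b, ha, hb, hab⟩ := Nat.dvd_mul.mp (hn ▸ card_subgroup_dvd_card L)
  rcases (Nat.dvd_prime hp).mp ha with rfl | rfl <;>
    rcases (Nat.dvd_prime hq).mp hb with rfl | rfl
  · exact absurd (card_eq_one.mp (by rw [← hab, one_mul])) hL.ne'
  · exact .inr (by rw [← hab, one_mul])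
  · exact .inl (by rw [← hab, mul_one])
  · exact absurd (eq_top_of_card_eq L (by rw [← hab, hn])) hLtop.ne

lemma center_eq_bot_of_card_eq_mul (hcomm : ¬ ∀ a b : G, a * b = b * a) : center G = ⊥ := by
  by_contra hbot
  have htop : center G ≠ ⊤ := fun h => hcomm fun a b => mem_center_iff.mp (h ▸ mem_top b) a
  have hindex : (center G).index = q ∨ (center G).index = p := by
    have h := card_mul_index (center G)
    rcases card_eq_or_card_eq_of_bot_lt_of_lt_top hp hq hn (bot_lt_iff_ne_bot.mpr hbot)
      (lt_top_iff_ne_top.mpr htop) with hZ | hZ <;> rw [hZ, hn] at h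
    · exact .inl (Nat.eq_of_mul_eq_mul_left hp.pos h)
    · exact .inr (Nat.eq_of_mul_eq_mul_left hq.pos (h.trans (mul_comm p q)))
  have : IsCyclic (G ⧸ center G) := by
    rcases hindex with h | h
    · exact isCyclic_of_prime_card (hp := ⟨hq⟩) (h ▸ (index_eq_card _).symm)
    · exact isCyclic_of_prime_card (hp := ⟨hp⟩) (h ▸ (index_eq_card _).symm)
  exact hcomm (isMulCommutative_of_isCyclic_quotient_center_self G).is_comm.comm

lemma mul_lt_mStar_of_card_eq_mul (hpq : p ≠ q) : p * q < mStar G := by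
  have hsq : ∀ s : ℕ, s.Prime → s ∣ Nat.card G → s * s ≤ mStar G := by
    intro s hs hsG
    have := Fact.mk hs
    obtain ⟨g, hg⟩ := exists_prime_orderOf_dvd_card' s hsG
    have hcard : Nat.card (zpowers g) = s := by rw [Nat.card_zpowers, hg]
    calc s * s = Nat.card (zpowers g) * Nat.card (zpowers g) := by rw [hcard]
      _ ≤ mCD G (zpowers g) := Nat.mul_le_mul_left _ (card_le_of_le (le_centralizer _))
      _ ≤ mStar G := mCD_le_mStar _
  by_contra hle
  have hpp := (hsq p hp (hn ▸ dvd_mul_right p q)).trans (not_lt.mp hle)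
  have hqq := (hsq q hq (hn ▸ dvd_mul_left q p)).trans (not_lt.mp hle)
  exact hpq (le_antisymm (Nat.le_of_mul_le_mul_left hpp hp.pos)
    (Nat.le_of_mul_le_mul_right hqq hq.pos))

theorem denseCD_of_card_eq_mul (hpq : p ≠ q) (hcomm : ¬ ∀ a b : G, a * b = b * a) :
    DenseCD G := by
  rintro H K hHK ⟨L, hHL, hLK⟩
  have hprime : ∀ {X : Subgroup G}, ⊥ < X → X < ⊤ → (Nat.card X).Prime := fun h1 h2 =>
    (card_eq_or_card_eq_of_bot_lt_of_lt_top hp hq hn h1 h2).elim (· ▸ hp) (· ▸ hq)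
  have hL : ⊥ < L := bot_le.trans_lt hHL
  obtain rfl : H = ⊥ := eq_bot_of_lt_of_card_prime hHL (hprime hL (hLK.trans_le le_top))
  obtain rfl : K = ⊤ := by_contra fun hK =>
    hL.ne' (eq_bot_of_lt_of_card_prime hLK (hprime (hL.trans hLK) (lt_top_iff_ne_top.mpr hK)))
  have hlt := mul_lt_mStar_of_card_eq_mul hp hq hn hpq
  obtain ⟨X, hX⟩ := exists_mem_CD (G := G)
  refine ⟨X, hX, bot_lt_iff_ne_bot.mpr ?_, lt_top_iff_ne_top.mpr ?_⟩ <;> rintro rfl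
  · have hbot : mCD G ⊥ = mStar G := hX
    rw [mCD_bot, hn] at hbot
    exact hlt.ne hbot
  · have htop : mCD G ⊤ = mStar G := hX
    rw [mCD_top, card_eq_one.mpr (center_eq_bot_of_card_eq_mul hp hq hn hcomm), mul_one, hn] at htop
    exact hlt.ne htop

end PrimeMulPrime

theorem stmt13 (G : Type*) [Group G] [Finite G]
    (h2 : ∃ p q : ℕ, p.Prime ∧ q.Prime ∧ p ≠ q ∧ p ∣ Nat.card G ∧ q ∣ Nat.card G) :
    DenseCD G ↔
      ∃ p q : ℕ, p.Prime ∧ q.Prime ∧ p ≠ q ∧ Nat.card G = p * q ∧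
        ¬ ∀ a b : G, a * b = b * a := by
  obtain ⟨p, q, hp, hq, hpq, hpG, hqG⟩ := h2
  refine ⟨fun hd => hd.exists_primes_card_eq_mul hp hq hpq hpG hqG, ?_⟩
  rintro ⟨r, t, hr, ht, hrt, hn, hcomm⟩
  exact denseCD_of_card_eq_mul hr ht hn hrt hcomm
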